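/- arXiv:2008.11549 — 3 statements merged into one kernel-verified Lean document; each statement's English description precedes it below -/
import Mathlib

section
/- Let G' ≤ G with G = G'N and N' = G' ∩ N for a normal subgroup N ⊴ G. Then G ≀ S_n = (G' ≀ S_n)·(N^n) and (G' ≀ S_n) ∩ N^n = (N')^n, hence (G ≀ S_n)/N^n ≅ (G' ≀ S_n)/(N')^n. -/
/-- `S_n` acting on `G^n` by permuting coordinates. -/
def permAut (G : Type*) [Group G] (n : ℕ) :
    Equiv.Perm (Fin n) →* MulAut (Fin n → G) where
  toFun σ :=
    { toFun := fun g i => g (σ⁻¹ i)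
      invFun := fun g i => g (σ i)
      left_inv := fun g => by funext i; simp
      right_inv := fun g => by funext i; simp
      map_mul' := fun g h => rfl }
  map_one' := by ext g i; rfl
  map_mul' σ τ := by
    ext g i
    simp [MulAut.mul_apply, Equiv.Perm.mul_apply]

/-- The wreath product `G ≀ S_n = G^n ⋊ S_n`. -/
abbrev Wr (G : Type*) [Group G] (n : ℕ) :=
  SemidirectProduct (Fin n → G) (Equiv.Perm (Fin n)) (permAut G n)

/-- `N^n`, embedded in the base group of `G ≀ S_n`. -/
def basePow {G : Type*} [Group G] (N : Subgroup G) (n : ℕ) : Subgroup (Wr G n) :=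
  (Subgroup.pi Set.univ fun _ : Fin n => N).map SemidirectProduct.inl

/-- `G' ≀ S_n` regarded as a subgroup of `G ≀ S_n`: the elements whose base-group
coordinates all lie in `G'` (and arbitrary permutation part). -/
def wrSub {G : Type*} [Group G] (G' : Subgroup G) (n : ℕ) : Subgroup (Wr G n) where
  carrier := {x | ∀ i, x.left i ∈ G'}
  one_mem' := by intro i; simpa using G'.one_mem
  mul_mem' := by
    intro x y hx hy i
    rw [SemidirectProduct.mul_left]
    exact G'.mul_mem (hx i) (hy (x.right⁻¹ i))
  inv_mem' := by
    intro x hx i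
    rw [SemidirectProduct.inv_left]
    exact G'.inv_mem (hx ((x.right⁻¹)⁻¹ i))

lemma mem_basePow {G : Type*} [Group G] (N : Subgroup G) (n : ℕ) (x : Wr G n) :
    x ∈ basePow N n ↔ x.right = 1 ∧ ∀ i, x.left i ∈ N := by
  constructor
  · rintro ⟨y, hy, rfl⟩
    exact ⟨rfl, fun i => hy i (Set.mem_univ _)⟩
  · rintro ⟨h1, h2⟩
    refine ⟨x.left, fun i _ => h2 i, ?_⟩
    cases x
    subst h1
    rfl

def wrHom {G : Type*} [Group G] (G' : Subgroup G) (n : ℕ) : Wr G' n →* Wr G n :=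
  SemidirectProduct.map
    (Pi.monoidHom fun i => G'.subtype.comp (Pi.evalMonoidHom (fun _ : Fin n => G') i))
    (MonoidHom.id _)
    (fun σ => by ext g i; rfl)

@[simp] lemma wrHom_left {G : Type*} [Group G] (G' : Subgroup G) (n : ℕ) (x : Wr G' n) (i : Fin n) :
    ((wrHom G' n x).left i : G) = (x.left i : G) := rfl

@[simp] lemma wrHom_right {G : Type*} [Group G] (G' : Subgroup G) (n : ℕ) (x : Wr G' n) :
    (wrHom G' n x).right = x.right := rfl

lemma mem_wrSub {G : Type*} [Group G] (G' : Subgroup G) (n : ℕ) (x : Wr G n) :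
    x ∈ wrSub G' n ↔ ∀ i, x.left i ∈ G' := Iff.rfl


/-- if `G = G'N` and `N' = G' ∩ N`, then
`G ≀ S_n = (G' ≀ S_n)·N^n`, `(G' ≀ S_n) ∩ N^n = (N')^n`, and
`(G ≀ S_n)/N^n ≅ (G' ≀ S_n)/(N')^n`. -/
theorem wreath_factorization_and_iso (G : Type*) [Group G] (N : Subgroup G)
    [N.Normal] (G' : Subgroup G) (hGN : ∀ g : G, ∃ g' ∈ G', ∃ m ∈ N, g = g' * m)
    (n : ℕ) (hn : 0 < n)
    [(basePow N n).Normal]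
    [(basePow ((G' ⊓ N).subgroupOf G') n).Normal] :
    (∀ x : Wr G n, ∃ y ∈ wrSub G' n, ∃ z ∈ basePow N n, x = y * z) ∧
    (wrSub G' n ⊓ basePow N n = basePow (G' ⊓ N) n) ∧
    Nonempty ((Wr G n ⧸ basePow N n) ≃*
      (Wr G' n ⧸ basePow ((G' ⊓ N).subgroupOf G') n)) := by
  have part1 : ∀ x : Wr G n, ∃ y ∈ wrSub G' n, ∃ z ∈ basePow N n, x = y * z := by
    intro x
    choose g' hg' m hm hx using fun i => hGN (x.left i)
    refine ⟨⟨g', x.right⟩, hg', SemidirectProduct.inl (fun i => m (x.right i)),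
      (mem_basePow N n _).2 ⟨rfl, fun i => hm _⟩, ?_⟩
    refine SemidirectProduct.ext ?_ ?_
    · funext i
      rw [SemidirectProduct.mul_left]
      show x.left i = g' i * m (x.right (x.right⁻¹ i))
      simpa using hx i
    · rw [SemidirectProduct.mul_right, SemidirectProduct.right_inl, mul_one]
  refine ⟨part1, ?_, ?_⟩
  · ext x
    simp only [Subgroup.mem_inf, mem_basePow, mem_wrSub]
    constructor
    · rintro ⟨h1, h2, h3⟩; exact ⟨h2, fun i => ⟨h1 i, h3 i⟩⟩
    · rintro ⟨h1, h2⟩; exact ⟨fun i => (h2 i).1, h1, fun i => (h2 i).2⟩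
  · let ψ : Wr G' n →* Wr G n ⧸ basePow N n :=
      (QuotientGroup.mk' _).comp (wrHom G' n)
    have hker : ψ.ker = basePow ((G' ⊓ N).subgroupOf G') n := by
      ext x
      rw [MonoidHom.mem_ker, MonoidHom.comp_apply, QuotientGroup.mk'_apply,
        QuotientGroup.eq_one_iff, mem_basePow, mem_basePow]
      constructor
      · rintro ⟨h1, h2⟩
        exact ⟨h1, fun i => Subgroup.mem_subgroupOf.2 ⟨(x.left i).2, h2 i⟩⟩
      · rintro ⟨h1, h2⟩
        exact ⟨h1, fun i => (Subgroup.mem_subgroupOf.1 (h2 i)).2⟩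
    have hsurj : Function.Surjective ψ := by
      intro q
      obtain ⟨x, rfl⟩ := QuotientGroup.mk_surjective q
      obtain ⟨y, hy, z, hz, hxyz⟩ := part1 x
      refine ⟨⟨fun i => ⟨y.left i, hy i⟩, y.right⟩, ?_⟩
      have hφ : wrHom G' n ⟨fun i => ⟨y.left i, hy i⟩, y.right⟩ = y := rfl
      show QuotientGroup.mk (wrHom G' n _) = QuotientGroup.mk x
      rw [hφ, hxyz]
      exact (QuotientGroup.eq.2 (by simpa using hz)).symm
    exact ⟨((QuotientGroup.quotientMulEquivOfEq hker.symm).trans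
      (QuotientGroup.quotientKerEquivOfSurjective ψ hsurj)).symm⟩
end

section
/- Let A be a G-graded algebra over a commutative ring, where G is a group. Then the wreath product A ≀ S_n is a (G ≀ S_n)-graded algebra, with ((g_1,...,g_n),σ)-component equal to (A_{g_1} ⊗ ... ⊗ A_{g_n}) ⊗ 𝒪σ. Moreover, if A is a crossed product (each component A_g contains an invertible element), then A ≀ S_n is a crossed product over G ≀ S_n. -/
open scoped TensorProduct

/-- The underlying `𝒪`-module `A^{⊗n} ⊗ 𝒪S_n` of the wreath product `A ≀ S_n`. -/
noncomputable abbrev WrM (𝒪 A : Type*) [CommRing 𝒪] [Ring A] [Algebra 𝒪 A] (n : ℕ) :=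
  (⨂[𝒪] _ : Fin n, A) ⊗[𝒪] MonoidAlgebra 𝒪 (Equiv.Perm (Fin n))

/-- the pure element `(a_1 ⊗ ... ⊗ a_n) ⊗ c·σ` of `A ≀ S_n`. -/
noncomputable def wrElt {𝒪 A : Type*} [CommRing 𝒪] [Ring A] [Algebra 𝒪 A] {n : ℕ}
    (a : Fin n → A) (σ : Equiv.Perm (Fin n)) (c : 𝒪) : WrM 𝒪 A n :=
  (PiTensorProduct.tprod 𝒪 a) ⊗ₜ[𝒪] (MonoidAlgebra.single σ c)

/-- `mul` is the wreath product multiplication (an associative unital `𝒪`-bilinear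
multiplication, given on pure elements by the twisted formula). -/
noncomputable def IsWreathMul {𝒪 A : Type*} [CommRing 𝒪] [Ring A] [Algebra 𝒪 A] {n : ℕ}
    (mul : WrM 𝒪 A n → WrM 𝒪 A n → WrM 𝒪 A n) : Prop :=
  (∀ (a b : Fin n → A) (σ τ : Equiv.Perm (Fin n)) (c d : 𝒪),
    mul (wrElt a σ c) (wrElt b τ d) =
      wrElt (fun i => a i * b (σ⁻¹ i)) (σ * τ) (c * d)) ∧
  (∀ x y z, mul (mul x y) z = mul x (mul y z)) ∧
  (∀ x, mul (wrElt (fun _ => (1 : A)) 1 1) x = x) ∧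
  (∀ x, mul x (wrElt (fun _ => (1 : A)) 1 1) = x) ∧
  (∀ x y z, mul x (y + z) = mul x y + mul x z) ∧
  (∀ x y z, mul (x + y) z = mul x z + mul y z) ∧
  (∀ (s : 𝒪) x y, mul (s • x) y = s • mul x y) ∧
  (∀ (s : 𝒪) x y, mul x (s • y) = s • mul x y)

/-- A family of submodules is a grading of the multiplication `mul` with unit `one`:
internal direct sum, unit in the identity component, multiplicative on components. -/
def IsAlgGrading {𝒪 M ι : Type*} [CommRing 𝒪] [AddCommGroup M] [Module 𝒪 M]
    [Monoid ι] [DecidableEq ι] (mul : M → M → M) (one : M) (𝒜 : ι → Submodule 𝒪 M) : Prop :=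
  DirectSum.IsInternal 𝒜 ∧ one ∈ 𝒜 1 ∧
    ∀ g h a b, a ∈ 𝒜 g → b ∈ 𝒜 h → mul a b ∈ 𝒜 (g * h)

/-- every homogeneous component contains an invertible element. -/
def IsCrossed {𝒪 M ι : Type*} [CommRing 𝒪] [AddCommGroup M] [Module 𝒪 M]
    [Group ι] (mul : M → M → M) (one : M) (𝒜 : ι → Submodule 𝒪 M) : Prop :=
  ∀ g : ι, ∃ u ∈ 𝒜 g, ∃ v ∈ 𝒜 g⁻¹, mul u v = one ∧ mul v u = one

/-- The `((g_1,…,g_n),σ)`-component `(A_{g_1} ⊗ ... ⊗ A_{g_n}) ⊗ 𝒪σ` of `A ≀ S_n`. -/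
noncomputable def wrComp {𝒪 A G : Type*} [CommRing 𝒪] [Ring A] [Algebra 𝒪 A]
    [Group G] {n : ℕ} (𝒜 : G → Submodule 𝒪 A) (x : Wr G n) :
    Submodule 𝒪 (WrM 𝒪 A n) :=
  Submodule.span 𝒪
    {m | ∃ (a : Fin n → A) (c : 𝒪), (∀ i, a i ∈ 𝒜 (x.left i)) ∧ m = wrElt a x.right c}


namespace WreathAux

variable {𝒪 A : Type*} [CommRing 𝒪] [Ring A] [Algebra 𝒪 A] {n : ℕ}

local notation "T" => (⨂[𝒪] _ : Fin n, A)
local notation "PP" => Equiv.Perm (Fin n)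
local notation "MM" => MonoidAlgebra 𝒪 (Equiv.Perm (Fin n))

lemma wrElt_def (a : Fin n → A) (σ : Equiv.Perm (Fin n)) (c : 𝒪) :
    wrElt a σ c = (PiTensorProduct.tprod 𝒪 a) ⊗ₜ[𝒪] (MonoidAlgebra.single σ c) := rfl

/-- permutation action on the tensor power -/
noncomputable def act (σ : PP) : T →ₗ[𝒪] T :=
  PiTensorProduct.lift
    ((PiTensorProduct.tprod 𝒪 (s := fun _ : Fin n => A)).domDomCongr
      (σ⁻¹ : Equiv.Perm (Fin n)))

@[simp] lemma act_tprod (σ : PP) (a : Fin n → A) :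
    act (𝒪 := 𝒪) (A := A) σ (PiTensorProduct.tprod 𝒪 a) =
      PiTensorProduct.tprod 𝒪 (fun i => a (σ⁻¹ i)) := by
  simp [act, MultilinearMap.domDomCongr]

noncomputable def innerT (σ : PP) : T →ₗ[𝒪] (WrM 𝒪 A n →ₗ[𝒪] WrM 𝒪 A n) :=
  (((TensorProduct.mapBilinear (RingHom.id 𝒪) T MM T MM).flip
      (LinearMap.mulLeft 𝒪 (MonoidAlgebra.single σ (1 : 𝒪))))).comp
    ((LinearMap.mul 𝒪 T).compl₂ (act σ))

noncomputable def Θ : MM →ₗ[𝒪] (T →ₗ[𝒪] (WrM 𝒪 A n →ₗ[𝒪] WrM 𝒪 A n)) :=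
  (Finsupp.lsum 𝒪 (fun σ => LinearMap.toSpanSingleton 𝒪 _ (innerT σ))).comp
    (MonoidAlgebra.coeffLinearEquiv 𝒪).toLinearMap

noncomputable def mulMap : WrM 𝒪 A n →ₗ[𝒪] (WrM 𝒪 A n →ₗ[𝒪] WrM 𝒪 A n) :=
  TensorProduct.lift (Θ (𝒪 := 𝒪) (A := A) (n := n)).flip

lemma mulMap_wrElt (a b : Fin n → A) (σ τ : PP) (c d : 𝒪) :
    mulMap (wrElt a σ c) (wrElt b τ d) =
      wrElt (fun i => a i * b (σ⁻¹ i)) (σ * τ) (c * d) := by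
  have h1 : mulMap (𝒪 := 𝒪) (A := A) (n := n) (wrElt a σ c)
      = Θ (MonoidAlgebra.single σ c) (PiTensorProduct.tprod 𝒪 a) := rfl
  rw [h1]
  have h2 : Θ (𝒪 := 𝒪) (A := A) (n := n) (MonoidAlgebra.single σ c) = c • innerT σ := by
    rw [Θ, LinearMap.comp_apply, LinearEquiv.coe_coe, MonoidAlgebra.coeffLinearEquiv_apply,
      MonoidAlgebra.coeff_single]
    erw [Finsupp.lsum_single]
    rw [LinearMap.toSpanSingleton_apply]
  rw [h2]
  simp only [LinearMap.smul_apply, innerT, LinearMap.coe_comp, Function.comp_apply,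
    LinearMap.compl₂_apply, TensorProduct.mapBilinear_apply, LinearMap.flip_apply]
  unfold wrElt
  rw [TensorProduct.map_tmul]
  simp only [LinearMap.mul_apply', act_tprod, PiTensorProduct.tprod_mul_tprod,
    LinearMap.mulLeft_apply, MonoidAlgebra.single_mul_single, one_mul]
  rw [TensorProduct.smul_tmul', TensorProduct.smul_tmul, MonoidAlgebra.smul_single, smul_eq_mul]
  simp only [LinearMap.compl₂_apply, LinearMap.mul_apply', act_tprod,
    PiTensorProduct.tprod_mul_tprod]
  rfl

/-- induction over spanning elements of `WrM`. -/
theorem wr_ind {Q : WrM 𝒪 A n → Prop} (h0 : Q 0) (hadd : ∀ x y, Q x → Q y → Q (x + y))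
    (hgen : ∀ a σ c, Q (wrElt a σ c)) : ∀ x, Q x := by
  intro x
  induction x using TensorProduct.induction_on with
  | zero => exact h0
  | add x y hx hy => exact hadd _ _ hx hy
  | tmul t m =>
    have hsingle : ∀ (t : T) (σ : PP) (c : 𝒪), Q (t ⊗ₜ[𝒪] (MonoidAlgebra.single σ c : MM)) := by
      intro t σ c
      induction t using PiTensorProduct.induction_on with
      | smul_tprod r a =>
        have he : (r • PiTensorProduct.tprod 𝒪 a) ⊗ₜ[𝒪] (MonoidAlgebra.single σ c : MM)
            = wrElt a σ (r * c) := by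
          rw [TensorProduct.smul_tmul, MonoidAlgebra.smul_single, smul_eq_mul]; rfl
        rw [he]; exact hgen _ _ _
      | add u v hu hv => rw [TensorProduct.add_tmul]; exact hadd _ _ hu hv
    induction m using MonoidAlgebra.induction with
    | zero => simpa using h0
    | single_add σ c f _ _ ih =>
      rw [TensorProduct.tmul_add]
      exact hadd _ _ (hsingle t σ c) ih

section Grading

variable {G : Type*} [Group G] [DecidableEq G]
variable (𝒜 : G → Submodule 𝒪 A) (hI : DirectSum.IsInternal 𝒜)

/-- projection onto a component of an internal direct sum -/
noncomputable def pr (g : G) : A →ₗ[𝒪] A :=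
  (𝒜 g).subtype ∘ₗ (DirectSum.component 𝒪 G (fun g => 𝒜 g) g) ∘ₗ
    (LinearEquiv.ofBijective (DirectSum.coeLinearMap 𝒜) hI).symm.toLinearMap

lemma pr_mem (g : G) (a : A) : pr 𝒜 hI g a ∈ 𝒜 g := Submodule.coe_mem _

lemma pr_of_mem {g : G} {a : A} (ha : a ∈ 𝒜 g) : pr 𝒜 hI g a = a := by
  simp only [pr, LinearMap.coe_comp, Function.comp_apply, LinearEquiv.coe_coe,
    Submodule.coe_subtype, ← DirectSum.apply_eq_component]
  rw [hI.ofBijective_coeLinearMap_of_mem ha]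

lemma pr_of_ne {g h : G} (hgh : h ≠ g) {a : A} (ha : a ∈ 𝒜 h) : pr 𝒜 hI g a = 0 := by
  simp only [pr, LinearMap.coe_comp, Function.comp_apply, LinearEquiv.coe_coe,
    Submodule.coe_subtype, ← DirectSum.apply_eq_component]
  rw [hI.ofBijective_coeLinearMap_of_mem_ne hgh ha]
  rfl

lemma pr_sum [Fintype G] (a : A) : ∑ g : G, pr 𝒜 hI g a = a := by
  set e := LinearEquiv.ofBijective (DirectSum.coeLinearMap 𝒜) hI with he
  have h1 : ∀ g, pr 𝒜 hI g a = ((e.symm a) g : A) := fun g => rfl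
  simp_rw [h1]
  have h2 : ∀ y : DirectSum G fun g => 𝒜 g, ∑ g : G, ((y g : A)) = DirectSum.coeLinearMap 𝒜 y := by
    intro y
    conv_rhs => rw [← DirectSum.sum_univ_of y]
    rw [map_sum]
    exact Finset.sum_congr rfl fun g _ => (DirectSum.coeLinearMap_of _ _ _).symm
  rw [h2]
  exact e.apply_symm_apply a

variable {nn : ℕ}

/-- componentwise projection on the tensor power -/
noncomputable def prT (g : Fin n → G) : T →ₗ[𝒪] T :=
  PiTensorProduct.map (fun i => pr 𝒜 hI (g i))

/-- projection onto the `σ` coefficient in the monoid algebra -/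
noncomputable def prM (σ : PP) : MM →ₗ[𝒪] MM :=
  (MonoidAlgebra.lsingle σ).comp ((Finsupp.lapply σ).comp (MonoidAlgebra.coeffLinearEquiv 𝒪).toLinearMap)

lemma prM_single (σ τ : PP) (c : 𝒪) :
    prM (𝒪 := 𝒪) (n := n) σ (MonoidAlgebra.single τ c)
      = MonoidAlgebra.single σ (if τ = σ then c else 0) := by
  show ((MonoidAlgebra.lsingle σ : 𝒪 →ₗ[𝒪] MM)
      ((Finsupp.lapply σ : (PP →₀ 𝒪) →ₗ[𝒪] 𝒪) (Finsupp.single τ c))) = _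
  simp [Finsupp.single_apply]

/-- projection onto the `x` component of the wreath product -/
noncomputable def πW (x : Wr G n) : WrM 𝒪 A n →ₗ[𝒪] WrM 𝒪 A n :=
  TensorProduct.map (prT 𝒜 hI x.left) (prM x.right)

lemma πW_mem (x : Wr G n) (m : WrM 𝒪 A n) : πW 𝒜 hI x m ∈ wrComp 𝒜 x := by
  induction m using TensorProduct.induction_on with
  | zero => simp
  | add u v hu hv => rw [map_add]; exact add_mem hu hv
  | tmul t mm =>
    rw [πW, TensorProduct.map_tmul]
    have h : prM x.right mm = MonoidAlgebra.single x.right (mm.coeff x.right) := rfl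
    rw [h]
    induction t using PiTensorProduct.induction_on with
    | smul_tprod r a =>
      rw [map_smul, ← TensorProduct.smul_tmul']
      refine Submodule.smul_mem _ _ ?_
      rw [prT, PiTensorProduct.map_tprod]
      exact Submodule.subset_span
        ⟨fun i => pr 𝒜 hI (x.left i) (a i), mm.coeff x.right, fun i => pr_mem 𝒜 hI _ _, rfl⟩
    | add u v hu hv => rw [map_add, TensorProduct.add_tmul]; exact add_mem hu hv

lemma πW_of_mem {x : Wr G n} {m : WrM 𝒪 A n} (hm : m ∈ wrComp 𝒜 x) : πW 𝒜 hI x m = m := by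
  refine Submodule.span_induction ?_ (by simp) (fun u v _ _ hu hv => by rw [map_add, hu, hv])
    (fun r u _ hu => by rw [map_smul, hu]) hm
  rintro m ⟨a, c, ha, rfl⟩
  rw [wrElt_def, πW, TensorProduct.map_tmul, prT, PiTensorProduct.map_tprod, prM_single,
    if_pos rfl]
  congr 1
  exact congrArg _ (funext fun i => pr_of_mem 𝒜 hI (ha i))

lemma πW_of_ne {x y : Wr G n} (hxy : y ≠ x) {m : WrM 𝒪 A n} (hm : m ∈ wrComp 𝒜 y) :
    πW 𝒜 hI x m = 0 := by
  refine Submodule.span_induction ?_ (by simp) (fun u v _ _ hu hv => by rw [map_add, hu, hv, add_zero])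
    (fun r u _ hu => by rw [map_smul, hu, smul_zero]) hm
  rintro m ⟨a, c, ha, rfl⟩
  rw [wrElt_def, πW, TensorProduct.map_tmul, prM_single]
  by_cases hr : y.right = x.right
  · have hl : y.left ≠ x.left := by
      intro hl; exact hxy (SemidirectProduct.ext hl hr)
    obtain ⟨i, hi⟩ := Function.ne_iff.mp hl
    have hz : prT 𝒜 hI x.left (PiTensorProduct.tprod 𝒪 a) = 0 := by
      rw [prT, PiTensorProduct.map_tprod]
      have : pr 𝒜 hI (x.left i) (a i) = 0 := pr_of_ne 𝒜 hI hi (ha i)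
      exact MultilinearMap.map_coord_zero _ i this
    rw [hz, TensorProduct.zero_tmul]
  · rw [if_neg hr, MonoidAlgebra.single_zero, TensorProduct.tmul_zero]

/-- the product decomposition of the wreath product index -/
def prodEquiv (G : Type*) [Group G] (n : ℕ) :
    ((Fin n → G) × Equiv.Perm (Fin n)) ≃ Wr G n where
  toFun p := ⟨p.1, p.2⟩
  invFun x := (x.left, x.right)
  left_inv p := rfl
  right_inv x := rfl

lemma πW_sum [Fintype G] [Fintype (Wr G n)] (m : WrM 𝒪 A n) :
    ∑ x : Wr G n, πW 𝒜 hI x m = m := by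
  induction m using wr_ind with
  | h0 => simp
  | hadd u v hu hv => simp only [map_add]; rw [Finset.sum_add_distrib, hu, hv]
  | hgen a σ c =>
    rw [show ∑ x : Wr G n, (πW 𝒜 hI x) (wrElt a σ c)
          = ∑ p : (Fin n → G) × Equiv.Perm (Fin n), (πW 𝒜 hI (prodEquiv G n p)) (wrElt a σ c)
        from (Equiv.sum_comp (prodEquiv G n) _).symm,
      Fintype.sum_prod_type]
    have hterm : ∀ (g : Fin n → G) (τ : PP),
        πW 𝒜 hI (prodEquiv G n (g, τ)) (wrElt a σ c)
          = prT 𝒜 hI g (PiTensorProduct.tprod 𝒪 a) ⊗ₜ[𝒪]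
              MonoidAlgebra.single τ (if σ = τ then c else 0) := by
      intro g τ
      rw [wrElt_def, πW, TensorProduct.map_tmul, prM_single]
      rfl
    simp_rw [hterm]
    have hτ : ∀ g : Fin n → G, ∑ τ : PP,
        prT 𝒜 hI g (PiTensorProduct.tprod 𝒪 a) ⊗ₜ[𝒪]
          MonoidAlgebra.single τ (if σ = τ then c else 0)
        = prT 𝒜 hI g (PiTensorProduct.tprod 𝒪 a) ⊗ₜ[𝒪] MonoidAlgebra.single σ c := by
      intro g
      rw [Finset.sum_eq_single σ]
      · rw [if_pos rfl]
      · intro τ _ hτσ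
        rw [if_neg (Ne.symm hτσ), MonoidAlgebra.single_zero,
          TensorProduct.tmul_zero]
      · intro h; exact absurd (Finset.mem_univ σ) h
    simp_rw [hτ]
    rw [← TensorProduct.sum_tmul]
    congr 1
    have hexp : ∑ g : Fin n → G, prT 𝒜 hI g (PiTensorProduct.tprod 𝒪 a)
        = PiTensorProduct.tprod 𝒪 (fun i => ∑ h : G, pr 𝒜 hI h (a i)) := by
      rw [MultilinearMap.map_sum]
      exact Finset.sum_congr rfl fun g _ => by rw [prT, PiTensorProduct.map_tprod]
    rw [hexp]
    exact congrArg _ (funext fun i => pr_sum 𝒜 hI (a i))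

lemma inv_left_apply (x : Wr G n) (i : Fin n) :
    (x⁻¹).left i = (x.left (x.right i))⁻¹ := by
  show (permAut G n x.right⁻¹ x.left⁻¹) i = _
  show (x.left⁻¹) ((x.right⁻¹)⁻¹ i) = _
  rw [inv_inv]
  rfl

lemma mul_left_apply (x y : Wr G n) (i : Fin n) :
    (x * y).left i = x.left i * y.left (x.right⁻¹ i) := rfl

end Grading

end WreathAux

set_option maxHeartbeats 2000000 in
set_option synthInstance.maxHeartbeats 1000000 in
/-- if `A` is a `G`-graded algebra then `A ≀ S_n` is `G ≀ S_n`-graded with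
`((g_1,…,g_n),σ)`-component `(A_{g_1} ⊗ ... ⊗ A_{g_n}) ⊗ 𝒪σ`; if moreover `A` is a
crossed product then so is `A ≀ S_n` over `G ≀ S_n`. -/
theorem wreath_product_graded (𝒪 A G : Type*) [CommRing 𝒪] [Ring A] [Algebra 𝒪 A]
    [Group G] [Finite G] [DecidableEq G] (n : ℕ) (hn : 0 < n) [DecidableEq (Wr G n)]
    (𝒜 : G → Submodule 𝒪 A)
    (hA : IsAlgGrading (fun a b : A => a * b) 1 𝒜) :
    ∃ mul : WrM 𝒪 A n → WrM 𝒪 A n → WrM 𝒪 A n, IsWreathMul mul ∧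
      IsAlgGrading mul (wrElt (fun _ => (1 : A)) 1 1) (wrComp 𝒜) ∧
      (IsCrossed (fun a b : A => a * b) 1 𝒜 →
        IsCrossed mul (wrElt (fun _ => (1 : A)) 1 1) (wrComp 𝒜)) := by
  classical
  haveI : Fintype G := Fintype.ofFinite G
  haveI : Fintype (Wr G n) := Fintype.ofEquiv _ (WreathAux.prodEquiv G n)
  obtain ⟨hint, hone, hmul⟩ := hA
  refine ⟨fun x y => WreathAux.mulMap x y, ⟨WreathAux.mulMap_wrElt, ?_, ?_, ?_, ?_, ?_, ?_, ?_⟩,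
    ⟨?_, ?_, ?_⟩, ?_⟩
  · -- associativity
    intro x y z
    induction x using WreathAux.wr_ind with
    | h0 => simp
    | hadd u v hu hv => simp only [map_add, LinearMap.add_apply, hu, hv]
    | hgen a σ c =>
      induction y using WreathAux.wr_ind with
      | h0 => simp
      | hadd u v hu hv => simp only [map_add, LinearMap.add_apply, hu, hv]
      | hgen b τ d =>
        induction z using WreathAux.wr_ind with
        | h0 => simp
        | hadd u v hu hv => simp only [map_add, hu, hv]
        | hgen e ρ f =>
          beta_reduce
          rw [WreathAux.mulMap_wrElt, WreathAux.mulMap_wrElt, WreathAux.mulMap_wrElt,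
            WreathAux.mulMap_wrElt, mul_assoc, mul_assoc]
          congr 1
          funext i
          simp [mul_assoc, mul_inv_rev, Equiv.Perm.mul_apply]
  · -- left unit
    intro x
    induction x using WreathAux.wr_ind with
    | h0 => simp
    | hadd u v hu hv => simp only [map_add, hu, hv]
    | hgen a σ c =>
      beta_reduce
      rw [WreathAux.mulMap_wrElt]
      simp [inv_one, Equiv.Perm.one_apply, one_mul]
  · -- right unit
    intro x
    induction x using WreathAux.wr_ind with
    | h0 => simp
    | hadd u v hu hv => simp only [map_add, LinearMap.add_apply, hu, hv]
    | hgen a σ c =>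
      beta_reduce
      rw [WreathAux.mulMap_wrElt]
      simp [mul_one]
  · intro x y z; beta_reduce; rw [map_add]
  · intro x y z; beta_reduce; rw [map_add, LinearMap.add_apply]
  · intro s x y; beta_reduce; rw [map_smul, LinearMap.smul_apply]
  · intro s x y; beta_reduce; rw [map_smul]
  · -- internal direct sum
    set Dmap : WrM 𝒪 A n →ₗ[𝒪] DirectSum (Wr G n) (fun x => wrComp 𝒜 x) :=
      ∑ x : Wr G n, (DirectSum.lof 𝒪 (Wr G n) (fun x => wrComp 𝒜 x) x).comp
        ((WreathAux.πW 𝒜 hint x).codRestrict (wrComp 𝒜 x) (WreathAux.πW_mem 𝒜 hint x))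
      with hDmap
    have hD : ∀ m, DirectSum.coeLinearMap (wrComp 𝒜) (Dmap m) = m := by
      intro m
      rw [hDmap, LinearMap.sum_apply, map_sum]
      have : ∀ x : Wr G n,
          DirectSum.coeLinearMap (wrComp 𝒜)
            (((DirectSum.lof 𝒪 (Wr G n) (fun x => wrComp 𝒜 x) x).comp
              ((WreathAux.πW 𝒜 hint x).codRestrict (wrComp 𝒜 x)
                (WreathAux.πW_mem 𝒜 hint x))) m)
          = WreathAux.πW 𝒜 hint x m := by
        intro x
        rw [LinearMap.comp_apply, DirectSum.lof_eq_of, DirectSum.coeLinearMap_of]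
        rfl
      rw [Finset.sum_congr rfl fun x _ => this x]
      exact WreathAux.πW_sum 𝒜 hint m
    have hD2 : ∀ y : DirectSum (Wr G n) (fun x => wrComp 𝒜 x),
        Dmap (DirectSum.coeLinearMap (wrComp 𝒜) y) = y := by
      intro y
      induction y using DirectSum.induction_on with
      | zero => simp
      | add u v hu hv => rw [map_add, map_add, hu, hv]
      | of x v =>
        rw [DirectSum.coeLinearMap_of, hDmap, LinearMap.sum_apply]
        rw [Finset.sum_eq_single x]
        · rw [LinearMap.comp_apply, DirectSum.lof_eq_of]
          congr 1
          exact Subtype.ext (WreathAux.πW_of_mem 𝒜 hint v.2)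
        · intro x' _ hx'
          rw [LinearMap.comp_apply]
          have hz : ((WreathAux.πW 𝒜 hint x').codRestrict (wrComp 𝒜 x')
              (WreathAux.πW_mem 𝒜 hint x')) (v : WrM 𝒪 A n) = 0 :=
            Subtype.ext (WreathAux.πW_of_ne 𝒜 hint hx'.symm v.2)
          rw [hz, map_zero]
        · intro h; exact absurd (Finset.mem_univ x) h
    exact ⟨Function.LeftInverse.injective hD2, fun m => ⟨Dmap m, hD m⟩⟩
  · -- identity component contains the unit
    exact Submodule.subset_span ⟨fun _ => 1, 1, fun i => hone, rfl⟩
  · -- multiplicativity of the grading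
    intro x y a b ha hb
    refine Submodule.span_induction
      (p := fun a _ => ∀ b ∈ wrComp 𝒜 y, WreathAux.mulMap a b ∈ wrComp 𝒜 (x * y))
      ?_ ?_ ?_ ?_ ha b hb
    · rintro m ⟨a', c, ha', rfl⟩ b hb
      refine Submodule.span_induction
        (p := fun b _ => WreathAux.mulMap (wrElt a' x.right c) b ∈ wrComp 𝒜 (x * y))
        ?_ ?_ ?_ ?_ hb
      · rintro m ⟨b', d, hb', rfl⟩
        rw [WreathAux.mulMap_wrElt]
        exact Submodule.subset_span
          ⟨fun i => a' i * b' (x.right⁻¹ i), c * d,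
            fun i => hmul _ _ _ _ (ha' i) (hb' _), rfl⟩
      · beta_reduce; rw [map_zero]; exact Submodule.zero_mem _
      · intro u v _ _ hu hv; beta_reduce at hu hv ⊢; rw [map_add]; exact add_mem hu hv
      · intro r u _ hu; beta_reduce at hu ⊢; rw [map_smul]; exact Submodule.smul_mem _ _ hu
    · intro b hb; beta_reduce; rw [map_zero, LinearMap.zero_apply]; exact Submodule.zero_mem _
    · intro u v _ _ hu hv b hb
      have hu' := hu b hb; have hv' := hv b hb
      beta_reduce at hu' hv' ⊢
      rw [map_add, LinearMap.add_apply]; exact add_mem hu' hv'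
    · intro r u _ hu b hb
      have hu' := hu b hb
      beta_reduce at hu' ⊢
      rw [map_smul, LinearMap.smul_apply]; exact Submodule.smul_mem _ _ hu'
  · -- crossed product
    intro hC x
    choose u hu v hv h using hC
    refine ⟨wrElt (fun i => u (x.left i)) x.right 1,
      Submodule.subset_span ⟨fun i => u (x.left i), 1, fun i => hu _, rfl⟩,
      wrElt (fun i => v (x.left (x.right i))) x.right⁻¹ 1, ?_, ?_, ?_⟩
    · refine Submodule.subset_span ⟨fun i => v (x.left (x.right i)), 1, fun i => ?_, rfl⟩
      rw [WreathAux.inv_left_apply]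
      exact hv _
    · beta_reduce
      rw [WreathAux.mulMap_wrElt]
      have h1 : (fun i => u (x.left i) * v (x.left (x.right ((x.right)⁻¹ i))))
          = fun _ : Fin n => (1 : A) :=
        funext fun i => by rw [show x.right (x.right⁻¹ i) = i from x.right.apply_symm_apply i]; exact (h (x.left i)).1
      rw [h1, mul_inv_cancel, one_mul]
    · beta_reduce
      rw [WreathAux.mulMap_wrElt]
      have h1 : (fun i => v (x.left (x.right i)) * u (x.left (((x.right)⁻¹)⁻¹ i)))
          = fun _ : Fin n => (1 : A) :=
        funext fun i => by rw [inv_inv]; exact (h (x.left (x.right i))).2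
      rw [h1, inv_mul_cancel, one_mul]
end

section
/- Let G act on an algebra A, and let 𝒞 be an algebra equipped with a G-action and a G-grading such that ᵍc ∈ 𝒞_{ghg⁻¹} for c ∈ 𝒞_h (a G-graded G-acted algebra). Then 𝒞^{⊗n} is a (G ≀ S_n)-acted G^n-graded algebra, where ^{((g_1,...,g_n),σ)}(c_1⊗...⊗c_n) := (^{g_1}c_{σ⁻¹(1)}) ⊗ ... ⊗ (^{g_n}c_{σ⁻¹(n)}); in particular this formula defines a group action of G ≀ S_n by algebra automorphisms on 𝒞^{⊗n}. -/
open scoped TensorProduct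

/-- the `(h_1,…,h_n)`-component `𝒞_{h_1} ⊗ … ⊗ 𝒞_{h_n}` of the `G^n`-grading on
`𝒞^{⊗n}`. -/
noncomputable def tensComp {𝒪 𝒞 G : Type*} [CommRing 𝒪] [Ring 𝒞] [Algebra 𝒪 𝒞]
    [Group G] {n : ℕ} (𝒢 : G → Submodule 𝒪 𝒞) (h : Fin n → G) :
    Submodule 𝒪 (⨂[𝒪] _ : Fin n, 𝒞) :=
  Submodule.span 𝒪
    {t | ∃ c : Fin n → 𝒞, (∀ i, c i ∈ 𝒢 (h i)) ∧ t = PiTensorProduct.tprod 𝒪 c}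

/-!
The element `x = (g, σ)` of `G ≀ S_n` acts on `𝒞^{⊗n}` by lifting the multilinear map
`c ↦ ⊗ᵢ φ(gᵢ)(c_{σ⁻¹ i})`, which is multiplicative because each `φ(gᵢ)` is. On pure tensors,
composing two such maps is exactly the multiplication law `(g, σ)(g', σ') = (g · σ•g', σσ')` of
the wreath product, so they form an action by algebra automorphisms. For the grading, the `i`-th
coordinate of `x h x⁻¹` is `gᵢ h_{σ⁻¹ i} gᵢ⁻¹`, and `φ(gᵢ)` carries `𝒞_{h_{σ⁻¹ i}}` there.
-/
@[simp]
lemma permAut_apply {G : Type*} [Group G] {n : ℕ} (σ : Equiv.Perm (Fin n)) (g : Fin n → G)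
    (i : Fin n) : permAut G n σ g i = g (σ⁻¹ i) := rfl

namespace Wr

variable {G : Type*} [Group G] {n : ℕ}

lemma mul_left_apply (x y : Wr G n) (i : Fin n) :
    (x * y).left i = x.left i * y.left (x.right⁻¹ i) := rfl

lemma conj_inl_left_apply (x : Wr G n) (h : Fin n → G) (i : Fin n) :
    (x * SemidirectProduct.inl h * x⁻¹).left i = x.left i * h (x.right⁻¹ i) * (x.left i)⁻¹ := by
  simp [SemidirectProduct.mul_left, Equiv.Perm.inv_def]

end Wr

lemma PiTensorProduct.algHom_ext_tprod {R ι S : Type*} {A : ι → Type*} [CommSemiring R]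
    [∀ i, Semiring (A i)] [∀ i, Algebra R (A i)] [Semiring S] [Algebra R S]
    {f g : (⨂[R] i, A i) →ₐ[R] S} (h : ∀ a, f (tprod R a) = g (tprod R a)) : f = g :=
  AlgHom.toLinearMap_injective <| PiTensorProduct.ext <| MultilinearMap.ext h

noncomputable section

variable {𝒪 𝒞 G : Type*} [CommSemiring 𝒪] [Semiring 𝒞] [Algebra 𝒪 𝒞] [Group G] {n : ℕ}

def wreathMultilinearMap (φ : G →* (𝒞 ≃ₐ[𝒪] 𝒞)) (x : Wr G n) :
    MultilinearMap 𝒪 (fun _ : Fin n => 𝒞) (⨂[𝒪] _ : Fin n, 𝒞) :=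
  ((PiTensorProduct.tprod 𝒪).compLinearMap fun i => (φ (x.left i)).toLinearMap).domDomCongr
    x.right⁻¹

lemma wreathMultilinearMap_apply (φ : G →* (𝒞 ≃ₐ[𝒪] 𝒞)) (x : Wr G n) (c : Fin n → 𝒞) :
    wreathMultilinearMap φ x c =
      PiTensorProduct.tprod 𝒪 fun i => φ (x.left i) (c (x.right⁻¹ i)) := rfl

def wreathAlgHom (φ : G →* (𝒞 ≃ₐ[𝒪] 𝒞)) (x : Wr G n) :
    (⨂[𝒪] _ : Fin n, 𝒞) →ₐ[𝒪] (⨂[𝒪] _ : Fin n, 𝒞) :=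
  PiTensorProduct.liftAlgHom (wreathMultilinearMap φ x)
    (by simp [wreathMultilinearMap_apply, PiTensorProduct.one_def, Pi.one_def])
    (fun c d => by simp [wreathMultilinearMap_apply, Pi.mul_def])

@[simp]
lemma wreathAlgHom_tprod (φ : G →* (𝒞 ≃ₐ[𝒪] 𝒞)) (x : Wr G n) (c : Fin n → 𝒞) :
    wreathAlgHom φ x (PiTensorProduct.tprod 𝒪 c) =
      PiTensorProduct.tprod 𝒪 fun i => φ (x.left i) (c (x.right⁻¹ i)) := by
  simp [wreathAlgHom, PiTensorProduct.liftAlgHom, wreathMultilinearMap_apply]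

def wreathEnd (φ : G →* (𝒞 ≃ₐ[𝒪] 𝒞)) :
    Wr G n →* ((⨂[𝒪] _ : Fin n, 𝒞) →ₐ[𝒪] (⨂[𝒪] _ : Fin n, 𝒞)) where
  toFun := wreathAlgHom φ
  map_one' := PiTensorProduct.algHom_ext_tprod fun c => by simp
  map_mul' x y := PiTensorProduct.algHom_ext_tprod fun c => by simp [Wr.mul_left_apply]

def wreathAut (φ : G →* (𝒞 ≃ₐ[𝒪] 𝒞)) :
    Wr G n →* ((⨂[𝒪] _ : Fin n, 𝒞) ≃ₐ[𝒪] (⨂[𝒪] _ : Fin n, 𝒞)) :=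
  (AlgEquiv.algHomUnitsEquiv 𝒪 _).toMonoidHom.comp (wreathEnd φ).toHomUnits

lemma wreathAut_tprod (φ : G →* (𝒞 ≃ₐ[𝒪] 𝒞)) (x : Wr G n) (c : Fin n → 𝒞) :
    wreathAut φ x (PiTensorProduct.tprod 𝒪 c) =
      PiTensorProduct.tprod 𝒪 fun i => φ (x.left i) (c (x.right⁻¹ i)) :=
  wreathAlgHom_tprod φ x c

end

section Grading

variable {𝒪 𝒞 G : Type*} [CommRing 𝒪] [Ring 𝒞] [Algebra 𝒪 𝒞] [Group G] {n : ℕ}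
  (𝒢 : G → Submodule 𝒪 𝒞)

lemma tprod_mem_tensComp {h : Fin n → G} {c : Fin n → 𝒞} (hc : ∀ i, c i ∈ 𝒢 (h i)) :
    PiTensorProduct.tprod 𝒪 c ∈ tensComp 𝒢 h :=
  Submodule.subset_span ⟨c, hc, rfl⟩

lemma tensComp_le_iff {h : Fin n → G} {p : Submodule 𝒪 (⨂[𝒪] _ : Fin n, 𝒞)} :
    tensComp 𝒢 h ≤ p ↔
      ∀ c : Fin n → 𝒞, (∀ i, c i ∈ 𝒢 (h i)) → PiTensorProduct.tprod 𝒪 c ∈ p := by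
  simp only [tensComp, Submodule.span_le, Set.subset_def, Set.mem_ofPred_eq, SetLike.mem_coe]
  exact ⟨fun H c hc => H _ ⟨c, hc, rfl⟩, fun H _ ⟨c, hc, ht⟩ => ht ▸ H c hc⟩

lemma map_wreathAut_tensComp_le (φ : G →* (𝒞 ≃ₐ[𝒪] 𝒞))
    (hcompat : ∀ (g h : G), ∀ c ∈ 𝒢 h, φ g c ∈ 𝒢 (g * h * g⁻¹)) (x : Wr G n) (h : Fin n → G) :
    (tensComp 𝒢 h).map (wreathAut φ x).toLinearMap ≤
      tensComp 𝒢 (x * SemidirectProduct.inl h * x⁻¹).left := by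
  rw [Submodule.map_le_iff_le_comap, tensComp_le_iff]
  intro c hc
  rw [Submodule.mem_comap, AlgEquiv.toLinearMap_apply, wreathAut_tprod]
  refine tprod_mem_tensComp 𝒢 fun i => ?_
  rw [Wr.conj_inl_left_apply]
  exact hcompat _ _ _ (hc _)

end Grading

theorem tensor_power_wreath_acted_graded_general (𝒪 𝒞 G : Type*) [CommRing 𝒪] [Ring 𝒞]
    [Algebra 𝒪 𝒞] [Group G] (n : ℕ)
    (φ : G →* (𝒞 ≃ₐ[𝒪] 𝒞)) (𝒢 : G → Submodule 𝒪 𝒞)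
    (hcompat : ∀ (g h : G), ∀ c ∈ 𝒢 h, φ g c ∈ 𝒢 (g * h * g⁻¹)) :
    ∃ Φ : Wr G n →* ((⨂[𝒪] _ : Fin n, 𝒞) ≃ₐ[𝒪] (⨂[𝒪] _ : Fin n, 𝒞)),
      (∀ (x : Wr G n) (c : Fin n → 𝒞),
        Φ x (PiTensorProduct.tprod 𝒪 c) =
          PiTensorProduct.tprod 𝒪 (fun i => φ (x.left i) (c (x.right⁻¹ i)))) ∧
      (∀ (x : Wr G n) (h : Fin n → G),
        Submodule.map (Φ x).toLinearMap (tensComp 𝒢 h) ≤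
          tensComp 𝒢 (x * SemidirectProduct.inl h * x⁻¹).left) :=
  ⟨wreathAut φ, wreathAut_tprod φ, map_wreathAut_tensComp_le 𝒢 φ hcompat⟩

/-- if `𝒞` is a `G`-graded `G`-acted algebra then `𝒞^{⊗n}` is a
`(G ≀ S_n)`-acted, `G^n`-graded algebra, via
`^{((g_1,…,g_n),σ)}(c_1⊗…⊗c_n) = (^{g_1}c_{σ⁻¹(1)}) ⊗ … ⊗ (^{g_n}c_{σ⁻¹(n)})`. -/
theorem tensor_power_wreath_acted_graded (𝒪 𝒞 G : Type*) [CommRing 𝒪] [Ring 𝒞]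
    [Algebra 𝒪 𝒞] [Group G] [Finite G] (n : ℕ) (hn : 0 < n)
    (φ : G →* (𝒞 ≃ₐ[𝒪] 𝒞)) (𝒢 : G → Submodule 𝒪 𝒞)
    (hcompat : ∀ (g h : G), ∀ c ∈ 𝒢 h, φ g c ∈ 𝒢 (g * h * g⁻¹)) :
    ∃ Φ : Wr G n →* ((⨂[𝒪] _ : Fin n, 𝒞) ≃ₐ[𝒪] (⨂[𝒪] _ : Fin n, 𝒞)),
      (∀ (x : Wr G n) (c : Fin n → 𝒞),
        Φ x (PiTensorProduct.tprod 𝒪 c) =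
          PiTensorProduct.tprod 𝒪 (fun i => φ (x.left i) (c (x.right⁻¹ i)))) ∧
      (∀ (x : Wr G n) (h : Fin n → G),
        Submodule.map (Φ x).toLinearMap (tensComp 𝒢 h) ≤
          tensComp 𝒢 (x * SemidirectProduct.inl h * x⁻¹).left) :=
  tensor_power_wreath_acted_graded_general 𝒪 𝒞 G n φ 𝒢 hcompat
end
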